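/- If M is a simple connected matroid on a finite ground set E with at least two elements, then there exists an element i ∈ E such that the lattice of flats of the contraction M/i is isomorphic to the lattice of flats of a simple connected matroid; equivalently, the simplification of M/i is a connected matroid. -/

import Mathlib

/-! Self-contained definitions: matroid minors, rank, flats, the Möbius function of the
lattice of flats, the characteristic polynomial, the defining axioms of the
(inverse) Kazhdan–Lusztig polynomials of a matroid, and basic structural notions
(circuits, connectivity, simplicity, representability, modularity). -/

open Polynomial Matroid

namespace KL

variable {α : Type} [Fintype α]

/-- The deletion of a set `D` from the matroid `M`. -/
def del (M : Matroid α) (D : Set α) : Matroid α := M ↾ (M.E \ D)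

/-- The contraction of the matroid `M` by the set `C`, defined by duality. -/
def con (M : Matroid α) (C : Set α) : Matroid α := (del M✶ C)✶

/-- The rank of a matroid on a finite ground set: the maximal size of an independent set. -/
noncomputable def rk (M : Matroid α) : ℕ := sSup {n | ∃ I, M.Indep I ∧ I.ncard = n}

/-- The rank of a set `X` in a matroid `M`. -/
noncomputable def rkSet (M : Matroid α) (X : Set α) : ℕ := rk (M ↾ X)

/-- A matroid is loopless if every singleton of its ground set is independent. -/
def Loopless (M : Matroid α) : Prop := ∀ e ∈ M.E, M.Indep {e}

/-- A circuit of a matroid is a minimal dependent set. -/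
def Circuit (M : Matroid α) (C : Set α) : Prop :=
  M.Dep C ∧ ∀ D, M.Dep D → D ⊆ C → D = C

/-- A matroid is connected if its ground set is nonempty and every two distinct
elements of the ground set lie in a common circuit. -/
def Connected (M : Matroid α) : Prop :=
  M.E.Nonempty ∧ ∀ e f, e ∈ M.E → f ∈ M.E → e ≠ f → ∃ C, Circuit M C ∧ e ∈ C ∧ f ∈ C

/-- A matroid is simple if it has no loops and no pair of parallel elements; equivalently,
every subset of the ground set with at most two elements is independent. -/
def Simple (M : Matroid α) : Prop :=
  ∀ I : Set α, I ⊆ M.E → I.ncard ≤ 2 → M.Indep I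

/-- A matroid is representable over a field `𝔽` if there is an assignment of vectors to the
elements of the ground set such that independence coincides with linear independence. -/
def Representable (M : Matroid α) (𝔽 : Type) [Field 𝔽] : Prop :=
  ∃ (n : ℕ) (φ : α → (Fin n → 𝔽)), ∀ I : Set α,
    M.Indep I ↔ (I ⊆ M.E ∧ LinearIndependent 𝔽 (fun x : I => φ x))

/-- A matroid is regular if it is representable over every field. -/
def Regular (M : Matroid α) : Prop := ∀ (𝔽 : Type) (_ : Field 𝔽), Representable M 𝔽

/-- The lattice of flats of `M` is modular: `rk F + rk G = rk (F ∨ G) + rk (F ∧ G)` for all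
flats `F, G`, where the join of two flats is the closure of their union and their meet is
their intersection. -/
def ModularFlats (M : Matroid α) : Prop :=
  ∀ F G : Set α, M.IsFlat F → M.IsFlat G →
    rkSet M F + rkSet M G = rkSet M (M.closure (F ∪ G)) + rkSet M (F ∩ G)

open Classical in
/-- The finset of flats of a matroid on a finite ground set. -/
noncomputable def flats (M : Matroid α) : Finset (Set α) :=
  Finset.univ.filter fun F => M.IsFlat F

open Classical in
/-- The Möbius function of the lattice of flats of `M`, as a function on pairs of sets
(zero when either set is not a flat, and zero on non-ordered pairs of flats). -/
noncomputable def mob (M : Matroid α) (F G : Set α) : ℤ :=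
  letI : LocallyFiniteOrder {X : Set α // M.IsFlat X} := Fintype.toLocallyFiniteOrder
  if hF : M.IsFlat F then
    if hG : M.IsFlat G then
      IncidenceAlgebra.mu ℤ (⟨F, hF⟩ : {X : Set α // M.IsFlat X}) ⟨G, hG⟩
    else 0
  else 0

open Classical in
/-- The doubly-indexed Whitney numbers of the first kind:
`w_{i,j} = Σ μ(F,G)` over pairs of flats `F ⊆ G` with `rk F = i` and `rk G = j`. -/
noncomputable def whitney (M : Matroid α) (i j : ℕ) : ℤ :=
  ∑ F ∈ flats M, ∑ G ∈ flats M,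
    if rkSet M F = i ∧ rkSet M G = j ∧ F ⊆ G then mob M F G else 0

/-- The characteristic polynomial `χ_M(t) = Σ_{F ∈ L(M)} μ(∅,F) t^(r - rk F)`
of a (loopless) matroid. -/
noncomputable def chi (M : Matroid α) : Polynomial ℤ :=
  ∑ F ∈ flats M, C (mob M ∅ F) * X ^ (rk M - rkSet M F)

/-- The defining axioms of the Kazhdan–Lusztig polynomial assignment `M ↦ P_M(t)`:
`P_M = 1` in rank `0`; `deg P_M < r/2` for `r > 0`; and the defining recursion
`t^r P_M(t⁻¹) = Σ_{F ∈ L(M)} χ_{M_F}(t) P_{M^F}(t)`, where `t^r P_M(t⁻¹)` is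
formalized as `reflect r P_M`. -/
def IsKLPolynomial (P : Matroid α → Polynomial ℤ) : Prop :=
  (∀ N : Matroid α, Loopless N → rk N = 0 → P N = 1) ∧
  (∀ N : Matroid α, Loopless N → 0 < rk N → 2 * (P N).natDegree < rk N) ∧
  (∀ N : Matroid α, Loopless N →
    (P N).reflect (rk N) = ∑ F ∈ flats N, chi (N ↾ F) * P (con N F))

/-- The defining axioms of the inverse Kazhdan–Lusztig polynomial assignment `M ↦ Q_M(t)`:
`Q_M = 1` in rank `0`; `deg Q_M < r/2` for `r > 0`; and the defining recursion
`(-1)^r t^r Q_M(t⁻¹) = Σ_{F ∈ L(M)} (-1)^(rk F) Q_{M_F}(t) · t^(r - rk F) χ_{M^F}(t⁻¹)`,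
where `t^k p(t⁻¹)` is formalized as `reflect k p`. -/
def IsInvKLPolynomial (Q : Matroid α → Polynomial ℤ) : Prop :=
  (∀ N : Matroid α, Loopless N → rk N = 0 → Q N = 1) ∧
  (∀ N : Matroid α, Loopless N → 0 < rk N → 2 * (Q N).natDegree < rk N) ∧
  (∀ N : Matroid α, Loopless N →
    (-1 : Polynomial ℤ) ^ (rk N) * (Q N).reflect (rk N) =
      ∑ F ∈ flats N, (-1 : Polynomial ℤ) ^ (rkSet N F) * Q (N ↾ F) *
        (chi (con N F)).reflect (rk N - rkSet N F))


section Helpers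

open Set

set_option linter.unusedSectionVars false
set_option linter.unusedVariables false
set_option maxHeartbeats 1000000

variable {M P : Matroid α} {B C D F G I K L R S W X Y Z : Set α} {b c e f u v w x y z : α}

def Loopless' (M : Matroid α) : Prop := ∀ e ∈ M.E, M.Indep {e}

lemma flat_closure (M : Matroid α) (X : Set α) : M.IsFlat (M.closure X) := by
  rw [Matroid.closure_def, sInter_eq_iInter]
  have hne : Nonempty {F // F ∈ {F | M.IsFlat F ∧ X ∩ M.E ⊆ F}} :=
    ⟨⟨M.E, M.ground_isFlat, inter_subset_right⟩⟩
  exact Matroid.IsFlat.iInter fun F => F.2.1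

lemma flat_iff' : M.IsFlat F ↔ M.closure F = F ∧ F ⊆ M.E :=
  ⟨fun h => ⟨h.closure, h.subset_ground⟩, fun ⟨h1, _⟩ => h1 ▸ flat_closure M F⟩

lemma exists_circuit_subset (hD : M.Dep D) : ∃ C, Circuit M C ∧ C ⊆ D := by
  obtain ⟨C, ⟨hC, hCD⟩, hmin⟩ :=
    Set.Finite.exists_minimalFor (id : Set α → Set α) {C | M.Dep C ∧ C ⊆ D}
      (Set.toFinite _) ⟨D, hD, Subset.rfl⟩
  refine ⟨C, ⟨hC, fun D' hD' hsub => ?_⟩, hCD⟩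
  exact hsub.antisymm (hmin ⟨hD', hsub.trans hCD⟩ hsub)

lemma Circuit.dep (hC : Circuit M C) : M.Dep C := hC.1

lemma Circuit.subset_ground (hC : Circuit M C) : C ⊆ M.E := hC.1.subset_ground

lemma Circuit.nonempty (hC : Circuit M C) : C.Nonempty := by
  rw [Set.nonempty_iff_ne_empty]
  rintro rfl
  exact hC.1.not_indep M.empty_indep

lemma Circuit.eq_of_dep_subset (hC : Circuit M C) (hD : M.Dep D) (hDC : D ⊆ C) : D = C :=
  hC.2 D hD hDC

lemma Circuit.ssubset_indep (hC : Circuit M C) (hZC : Z ⊂ C) : M.Indep Z := by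
  by_contra h
  exact hZC.ne (hC.2 Z ⟨h, hZC.subset.trans hC.subset_ground⟩ hZC.subset)

lemma Circuit.diff_singleton_indep (hC : Circuit M C) (hx : x ∈ C) : M.Indep (C \ {x}) :=
  hC.ssubset_indep ⟨diff_subset, fun hsub => ((hsub hx).2 rfl)⟩

lemma Circuit.mem_closure_diff (hC : Circuit M C) (hx : x ∈ C) :
    x ∈ M.closure (C \ {x}) := by
  have hI : M.Indep (C \ {x}) := hC.diff_singleton_indep hx
  have hdep : M.Dep (insert x (C \ {x})) := by
    rw [insert_diff_singleton, insert_eq_of_mem hx]; exact hC.1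
  exact ((hI.insert_dep_iff).1 hdep).1

lemma exists_fund_circuit (hf : f ∈ M.closure S) (hfS : f ∉ S) (hS : S ⊆ M.E) :
    ∃ C, Circuit M C ∧ f ∈ C ∧ C ⊆ insert f S := by
  obtain ⟨I, hI⟩ := M.exists_isBasis S hS
  have hfI : f ∈ M.closure I := by rwa [hI.closure_eq_closure]
  have hfnI : f ∉ I := fun h => hfS (hI.subset h)
  have hdep : M.Dep (insert f I) := hI.indep.insert_dep_iff.2 ⟨hfI, hfnI⟩
  obtain ⟨C, hC, hCsub⟩ := exists_circuit_subset hdep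
  refine ⟨C, hC, ?_, hCsub.trans (insert_subset_insert hI.subset)⟩
  by_contra hfC
  exact hC.dep.not_indep (hI.indep.subset (fun y hy => (hCsub hy).resolve_left
    (fun h => hfC (h ▸ hy))))

/-- Strong circuit elimination. -/
lemma strong_elimination (hC : Circuit M C) (hD : Circuit M D) (hCD : C ≠ D)
    (he : e ∈ C ∩ D) (hf : f ∈ C \ D) :
    ∃ L, Circuit M L ∧ f ∈ L ∧ L ⊆ (C ∪ D) \ {e} := by
  set S : Set α := (C ∪ D) \ {e, f} with hS
  have hSE : S ⊆ M.E := diff_subset.trans (union_subset hC.subset_ground hD.subset_ground)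
  have heS : e ∈ M.closure S := by
    have h1 : D \ {e} ⊆ S := by
      intro y hy
      refine ⟨Or.inr hy.1, ?_⟩
      simp only [mem_insert_iff, mem_singleton_iff]
      rintro (rfl | rfl)
      · exact hy.2 rfl
      · exact hf.2 hy.1
    exact M.closure_subset_closure h1 (hD.mem_closure_diff he.2)
  have hsub : C \ {f} ⊆ M.closure S := by
    intro y hy
    rcases eq_or_ne y e with rfl | hye
    · exact heS
    · exact M.subset_closure S hSE ⟨Or.inl hy.1, by
        simp only [mem_insert_iff, mem_singleton_iff]
        rintro (rfl | rfl)
        · exact hye rfl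
        · exact hy.2 rfl⟩
  have hfS : f ∈ M.closure S := by
    have := M.closure_subset_closure_of_subset_closure hsub (hC.mem_closure_diff hf.1)
    exact this
  have hfnS : f ∉ S := fun h => h.2 (Or.inr rfl)
  obtain ⟨L, hL, hfL, hLsub⟩ := exists_fund_circuit hfS hfnS hSE
  refine ⟨L, hL, hfL, ?_⟩
  intro y hy
  rcases hLsub hy with rfl | hyS
  · exact ⟨Or.inl hf.1, fun h => hf.2 (h ▸ he.2)⟩
  · refine ⟨hyS.1, fun h => ?_⟩
    rcases mem_singleton_iff.1 h with rfl
    exact hyS.2 (mem_insert _ _)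

lemma circuit_eq_of_subset (hC : Circuit M C) (hD : Circuit M D) (h : D ⊆ C) : D = C :=
  hC.2 D hD.1 h

lemma conn_trans_aux : ∀ (n : ℕ) (C₁ C₂ : Set α) (x f z : α), (C₁ ∪ C₂).ncard ≤ n →
    Circuit M C₁ → Circuit M C₂ → x ∈ C₁ → f ∈ C₁ → f ∈ C₂ → z ∈ C₂ → x ≠ z →
    ∃ C, Circuit M C ∧ x ∈ C ∧ z ∈ C := by
  intro n
  induction n with
  | zero => intro C₁ C₂ x f z hn h1 h2 hx _ _ _ _
            rw [Nat.le_zero, Set.ncard_eq_zero (Set.toFinite _), Set.union_empty_iff] at hn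
            exact absurd (hn.1 ▸ hx) (Set.notMem_empty x)
  | succ n ih =>
    intro C₁ C₂ x f z hn h1 h2 hx hf1 hf2 hz hxz
    by_cases hzC1 : z ∈ C₁
    · exact ⟨C₁, h1, hx, hzC1⟩
    by_cases hxC2 : x ∈ C₂
    · exact ⟨C₂, h2, hxC2, hz⟩
    rcases Nat.lt_or_ge (C₁ ∪ C₂).ncard (n+1) with hlt | hge
    · exact ih C₁ C₂ x f z (Nat.lt_succ_iff.1 hlt) h1 h2 hx hf1 hf2 hz hxz
    -- C₃ : circuit with z ∈ C₃ ⊆ (C₁ ∪ C₂) \ {f}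
    have hne : C₂ ≠ C₁ := fun h => hzC1 (h ▸ hz)
    obtain ⟨C₃, h3, hzC3, h3sub⟩ :=
      strong_elimination h2 h1 hne ⟨hf2, hf1⟩ ⟨hz, hzC1⟩
    have h3sub' : C₃ ⊆ C₁ ∪ C₂ := h3sub.trans (by rw [union_comm]; exact diff_subset)
    have hfC3 : f ∉ C₃ := fun h => (h3sub h).2 rfl
    by_cases hxC3 : x ∈ C₃
    · exact ⟨C₃, h3, hxC3, hzC3⟩
    -- pick h ∈ C₃ \ C₂ ⊆ C₁
    have h3ne2 : ¬ C₃ ⊆ C₂ := by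
      intro hsub
      exact hfC3 ((circuit_eq_of_subset h2 h3 hsub) ▸ hf2)
    obtain ⟨h₀, hh3, hh2⟩ := not_subset.1 h3ne2
    have hh1 : h₀ ∈ C₁ := (h3sub' hh3).resolve_right hh2
    -- first minimality use : C₁ ∪ C₃ must be everything
    rcases Nat.lt_or_ge (C₁ ∪ C₃).ncard (n+1) with hlt13 | hge13
    · exact ih C₁ C₃ x h₀ z (Nat.lt_succ_iff.1 hlt13) h1 h3 hx hh1 hh3 hzC3 hxz
    have heq : C₁ ∪ C₃ = C₁ ∪ C₂ := by
      apply Set.eq_of_subset_of_ncard_le (union_subset subset_union_left h3sub')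
      exact hn.trans hge13
    have hC2sub : C₂ \ C₁ ⊆ C₃ := by
      intro w hw
      rcases (heq.symm ▸ (subset_union_right (s := C₁) (t := C₂)) hw.1) with h | h
      · exact absurd h hw.2
      · exact h
    -- C₃' : circuit with x ∈ C₃' ⊆ (C₁ ∪ C₂) \ {f}
    obtain ⟨C₃', h3', hxC3', h3'sub⟩ :=
      strong_elimination h1 h2 (Ne.symm hne) ⟨hf1, hf2⟩ ⟨hx, hxC2⟩
    have hfC3' : f ∉ C₃' := fun h => (h3'sub h).2 rfl
    by_cases hzC3' : z ∈ C₃'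
    · exact ⟨C₃', h3', hxC3', hzC3'⟩
    have h3'ne1 : ¬ C₃' ⊆ C₁ := by
      intro hsub
      exact hfC3' ((circuit_eq_of_subset h1 h3' hsub) ▸ hf1)
    obtain ⟨h₁, hh3', hh1'⟩ := not_subset.1 h3'ne1
    have hh₁C3 : h₁ ∈ C₃ := hC2sub ⟨((h3'sub hh3').1.resolve_left hh1'), hh1'⟩
    -- final : C₃' ∪ C₃ ⊆ (C₁ ∪ C₂) \ {f}, strictly smaller
    have hsmall : (C₃' ∪ C₃).ncard ≤ n := by
      have h3subc : C₃ ⊆ (C₁ ∪ C₂) \ {f} := by rwa [union_comm C₂ C₁] at h3sub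
      have hsub : C₃' ∪ C₃ ⊆ (C₁ ∪ C₂) \ {f} := union_subset h3'sub h3subc
      have h1le : (C₃' ∪ C₃).ncard ≤ ((C₁ ∪ C₂) \ {f}).ncard :=
        Set.ncard_le_ncard hsub (Set.toFinite _)
      have h2lt : ((C₁ ∪ C₂) \ {f}).ncard < (C₁ ∪ C₂).ncard :=
        Set.ncard_lt_ncard ⟨diff_subset, fun hs => (hs (Or.inl hf1)).2 rfl⟩ (Set.toFinite _)
      omega
    exact ih C₃' C₃ x h₁ z hsmall h3' h3 hxC3' hh3' hh₁C3 hzC3 hxz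

@[simp] lemma con_ground (M : Matroid α) (e : α) : (con M {e}).E = M.E \ {e} := rfl

lemma con_base (he : M.Indep {e}) (heE : e ∈ M.E) :
    (con M {e}).IsBase B ↔ B ⊆ M.E \ {e} ∧ M.IsBase (insert e B) := by
  have hXE : M.E \ {e} ⊆ M✶.E := diff_subset
  rw [con, del, dual_ground, dual_isBase_iff', restrict_ground_eq,
    isBase_restrict_iff hXE]
  constructor
  · rintro ⟨hBas, hBsub⟩
    refine ⟨hBsub, ?_⟩
    obtain ⟨Bs, hBsBase, hIeq⟩ := Matroid.IsBasis.exists_isBase hBas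
    by_cases heBs : e ∈ Bs
    · exfalso
      -- then B is a base of M, derive contradiction with maximality of the basis
      have hBsE : Bs ⊆ M.E := hBsBase.subset_ground
      have hBseq : Bs = ((M.E \ {e}) \ B) ∪ {e} := by
        ext w
        constructor
        · intro hw
          by_cases hwe : w = e
          · exact Or.inr (hwe ▸ rfl)
          · exact Or.inl (hIeq ▸ ⟨hw, hBsE hw, hwe⟩)
        · rintro (hw | hw)
          · exact (hIeq ▸ hw).1
          · exact (mem_singleton_iff.1 hw) ▸ heBs
      have hBbase : M.IsBase B := by
        have := hBsBase.compl_isBase_of_dual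
        have hcompl : M.E \ Bs = B := by
          rw [hBseq]
          ext w
          constructor
          · rintro ⟨hwE, hw⟩
            by_contra hwB
            by_cases hwe : w = e
            · exact hw (Or.inr (hwe ▸ rfl))
            · exact hw (Or.inl ⟨⟨hwE, hwe⟩, hwB⟩)
          · intro hwB
            refine ⟨(hBsub hwB).1, ?_⟩
            rintro (h | h)
            · exact h.2 hwB
            · exact (hBsub hwB).2 h
        rwa [hcompl] at this
      -- exchange: find x ∈ B with (insert e B) \ {x} spanning
      have hdep : M.Dep (insert e B) := hBbase.insert_dep ⟨heE, fun h => (hBsub h).2 rfl⟩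
      obtain ⟨Ce, hCe, hCesub⟩ := exists_circuit_subset hdep
      have heCe : e ∈ Ce := by
        by_contra heCe
        refine hCe.1.not_indep (hBbase.indep.subset fun w hw => ?_)
        rcases hCesub hw with rfl | h
        · exact absurd hw heCe
        · exact h
      have hCene : Ce ≠ {e} := by
        rintro rfl
        exact hCe.1.not_indep he
      obtain ⟨xx, hxxCe, hxxe⟩ : ∃ xx ∈ Ce, xx ≠ e := by
        by_contra hcon
        push_neg at hcon
        exact hCene (subset_antisymm (fun w hw => hcon w hw) (fun w hw =>
          (mem_singleton_iff.1 hw) ▸ heCe))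
      have hxxB : xx ∈ B := by
        rcases hCesub hxxCe with rfl | h
        · exact absurd rfl hxxe
        · exact h
      -- (insert e B) \ {xx} spans M
      have hxxcl : xx ∈ M.closure ((insert e B) \ {xx}) := by
        have h1 : Ce \ {xx} ⊆ (insert e B) \ {xx} :=
          fun w hw => ⟨hCesub hw.1, hw.2⟩
        have h2 : xx ∈ M.closure (Ce \ {xx}) := by
          have hI : M.Indep (Ce \ {xx}) :=
            (hCe.2 (Ce \ {xx}) |> fun himp => by
              by_contra hni
              have : M.Dep (Ce \ {xx}) := ⟨hni, diff_subset.trans hCe.1.subset_ground⟩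
              exact (fun hh => (hh ▸ (show xx ∉ Ce \ {xx} from fun hx => hx.2 rfl)) hxxCe)
                (himp this diff_subset))
          have hdep2 : M.Dep (insert xx (Ce \ {xx})) := by
            rw [insert_diff_singleton, insert_eq_of_mem hxxCe]; exact hCe.1
          exact (hI.insert_dep_iff.1 hdep2).1
        exact M.closure_subset_closure h1 h2
      have hspan : M.E ⊆ M.closure ((insert e B) \ {xx}) := by
        have h3 : M.closure (insert xx ((insert e B) \ {xx})) =
            M.closure ((insert e B) \ {xx}) :=
          M.closure_insert_eq_of_mem_closure hxxcl
        rw [insert_diff_singleton, insert_eq_of_mem (Set.mem_insert_of_mem e hxxB)] at h3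
        rw [← h3]
        have : M.closure B ⊆ M.closure (insert e B) := M.closure_subset_closure (subset_insert _ _)
        rw [hBbase.closure_eq] at this
        exact this
      obtain ⟨I, hI⟩ := M.exists_isBasis ((insert e B) \ {xx})
        (diff_subset.trans (insert_subset heE (hBsub.trans diff_subset)))
      have hIbase : M.IsBase I := by
        refine hI.indep.isBase_of_ground_subset_closure ?_
        rw [hI.closure_eq_closure]; exact hspan
      -- insert xx ((M.E \ {e}) \ B) is M✶-indep, contradicting hBas maximality
      have hdual : M✶.Indep (insert xx ((M.E \ {e}) \ B)) := by
        rw [dual_indep_iff_exists']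
        refine ⟨insert_subset ((hBsub hxxB).1) (diff_subset.trans diff_subset), I, hIbase, ?_⟩
        rw [disjoint_left]
        rintro w (rfl | hw)
        · exact fun hwI => (hI.subset hwI).2 rfl
        · intro hwI
          rcases hI.subset hwI with ⟨(rfl | hwB), _⟩
          · exact hw.1.2 rfl
          · exact hw.2 hwB
      have : M✶.Dep (insert xx ((M.E \ {e}) \ B)) :=
        hBas.insert_dep ⟨⟨(hBsub hxxB).1, (hBsub hxxB).2⟩, fun h => h.2 hxxB⟩
      exact this.not_indep hdual
    · -- e ∉ Bs : good case
      have hBsE : Bs ⊆ M.E := hBsBase.subset_ground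
      have hBseq : Bs = (M.E \ {e}) \ B := by
        have hinter : Bs ∩ (M.E \ {e}) = Bs :=
          inter_eq_left.2 (fun w hw => ⟨hBsE hw, fun h =>
            heBs ((mem_singleton_iff.1 h) ▸ hw)⟩)
        exact (hIeq.trans hinter).symm
      have := hBsBase.compl_isBase_of_dual
      have hcompl : M.E \ Bs = insert e B := by
        rw [hBseq]
        ext w
        constructor
        · rintro ⟨hwE, hw⟩
          by_cases hwe : w = e
          · exact Or.inl hwe
          · refine Or.inr ?_
            by_contra hwB
            exact hw ⟨⟨hwE, hwe⟩, hwB⟩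
        · rintro (rfl | hwB)
          · exact ⟨heE, fun hh => hh.1.2 rfl⟩
          · exact ⟨(hBsub hwB).1, fun hh => hh.2 hwB⟩
      rwa [hcompl] at this
  · rintro ⟨hBsub, hBase⟩
    refine ⟨?_, hBsub⟩
    have h1 : M.IsBasis ((insert e B) ∩ {e}) {e} := by
      rw [inter_eq_self_of_subset_right (singleton_subset_iff.2 (mem_insert _ _))]
      exact he.isBasis_self
    have h2 := (hBase.inter_isBasis_iff_compl_inter_isBasis_dual (singleton_subset_iff.2 heE)).1 h1
    have heq : (M.E \ insert e B) ∩ (M.E \ {e}) = (M.E \ {e}) \ B := by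
      ext w
      simp only [mem_diff, mem_inter_iff, mem_insert_iff, mem_singleton_iff, not_or]
      tauto
    rwa [heq] at h2

lemma con_indep (he : M.Indep {e}) (heE : e ∈ M.E) :
    (con M {e}).Indep I ↔ I ⊆ M.E \ {e} ∧ M.Indep (insert e I) := by
  rw [indep_iff]
  constructor
  · rintro ⟨B, hB, hIB⟩
    rw [con_base he heE] at hB
    exact ⟨hIB.trans hB.1, hB.2.indep.subset (insert_subset_insert hIB)⟩
  · rintro ⟨hIsub, hind⟩
    obtain ⟨B', hB', hsub⟩ := hind.exists_isBase_superset
    have heB' : e ∈ B' := hsub (mem_insert _ _)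
    refine ⟨B' \ {e}, ?_, ?_⟩
    · rw [con_base he heE, insert_diff_singleton, insert_eq_of_mem heB']
      exact ⟨diff_subset_diff_left hB'.subset_ground, hB'⟩
    · exact fun w hw => ⟨hsub (Or.inr hw), (hIsub hw).2⟩

lemma con_dep (he : M.Indep {e}) (heE : e ∈ M.E) :
    (con M {e}).Dep D ↔ D ⊆ M.E \ {e} ∧ M.Dep (insert e D) := by
  rw [dep_iff, con_indep he heE, con_ground, dep_iff]
  constructor
  · rintro ⟨hni, hsub⟩
    exact ⟨hsub, fun h => hni ⟨hsub, h⟩, insert_subset heE (hsub.trans diff_subset)⟩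
  · rintro ⟨hsub, hdep, -⟩
    exact ⟨fun h => hdep h.2, hsub⟩

/-- `C \ {e}` is a circuit of `M/e` when `C` is an `M`-circuit containing `e`. -/
lemma con_circuit_of_circuit (he : M.Indep {e}) (heE : e ∈ M.E)
    (hC : Circuit M C) (heC : e ∈ C) : Circuit (con M {e}) (C \ {e}) := by
  constructor
  · rw [con_dep he heE, insert_diff_singleton, insert_eq_of_mem heC]
    exact ⟨diff_subset_diff_left hC.1.subset_ground, hC.1⟩
  · intro D hD hDsub
    rw [con_dep he heE] at hD
    have : insert e D = C := hC.2 _ hD.2 (insert_subset heC (hDsub.trans diff_subset))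
    rw [← this]
    ext w
    simp only [mem_diff, mem_insert_iff, mem_singleton_iff]
    exact ⟨fun h => ⟨Or.inr h, fun hh => (hDsub h).2 hh⟩,
      fun ⟨h1, h2⟩ => h1.elim (fun hh => absurd hh h2) id⟩

lemma con_dep_of_circuit_not_mem (he : M.Indep {e}) (heE : e ∈ M.E)
    (hK : Circuit M K) (heK : e ∉ K) : (con M {e}).Dep K := by
  rw [con_dep he heE]
  refine ⟨fun w hw => ⟨hK.1.subset_ground hw, fun h => heK ((mem_singleton_iff.1 h) ▸ hw)⟩, ?_⟩
  exact hK.1.superset (subset_insert _ _) (insert_subset heE hK.1.subset_ground)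

lemma loopless_closure_empty (hP : Loopless' P) : P.closure ∅ = ∅ := by
  by_contra h
  obtain ⟨x, hx⟩ := nonempty_iff_ne_empty.2 h
  have hxE : x ∈ P.E := P.closure_subset_ground ∅ hx
  have : P.Dep (insert x ∅) := P.empty_indep.insert_dep_iff.2 ⟨hx, notMem_empty x⟩
  rw [insert_empty_eq] at this
  exact this.not_indep (hP x hxE)

lemma cl_singleton_comm (hP : Loopless' P) (hx : x ∈ P.E) (hy : y ∈ P.closure {x}) :
    P.closure {y} = P.closure {x} := by
  have hyE : y ∈ P.E := P.closure_subset_ground _ hy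
  have h1 : P.closure {y} ⊆ P.closure {x} :=
    P.closure_subset_closure_of_subset_closure (singleton_subset_iff.2 hy)
  have hxy : x ∈ P.closure {y} := by
    have h2 : y ∈ P.closure (insert x ∅) \ P.closure ∅ := by
      rw [loopless_closure_empty hP, insert_empty_eq]
      exact ⟨hy, notMem_empty y⟩
    have h3 := (Matroid.closure_exchange h2).1
    rwa [insert_empty_eq] at h3
  exact h1.antisymm (P.closure_subset_closure_of_subset_closure (singleton_subset_iff.2 hxy))

noncomputable def rep (P : Matroid α) (x : α) : α :=
  @Classical.epsilon α ⟨x⟩ (· ∈ P.closure {x})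

lemma rep_mem (hx : x ∈ P.E) : rep P x ∈ P.closure {x} :=
  @Classical.epsilon_spec α (· ∈ P.closure {x}) ⟨x, P.mem_closure_self x hx⟩

lemma rep_mem_ground (hx : x ∈ P.E) : rep P x ∈ P.E :=
  P.closure_subset_ground _ (rep_mem hx)

lemma rep_eq_of_cl_eq (h : P.closure {x} = P.closure {y}) : rep P x = rep P y := by
  unfold rep
  rw [h]

lemma cl_rep (hP : Loopless' P) (hx : x ∈ P.E) : P.closure {rep P x} = P.closure {x} :=
  cl_singleton_comm hP hx (rep_mem hx)

lemma rep_idem (hP : Loopless' P) (hx : x ∈ P.E) : rep P (rep P x) = rep P x :=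
  rep_eq_of_cl_eq (cl_rep hP hx)

lemma mem_rep_image_iff (hP : Loopless' P) (hx : x ∈ P.E) :
    x ∈ rep P '' P.E ↔ rep P x = x := by
  constructor
  · rintro ⟨z, hz, rfl⟩
    exact rep_idem hP hz
  · intro h
    exact ⟨x, hx, h⟩

lemma restrict_closure_eq' (hR : R ⊆ P.E) (hX : X ⊆ R) :
    (P ↾ R).closure X = P.closure X ∩ R := by
  obtain ⟨I, hI⟩ := P.exists_isBasis X (hX.trans hR)
  have hIN : (P ↾ R).IsBasis I X := (isBasis_restrict_iff hR).2 ⟨hI, hX⟩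
  rw [← hIN.closure_eq_closure, ← hI.closure_eq_closure]
  have hIi : (P ↾ R).Indep I := restrict_indep_iff.2 ⟨hI.indep, hI.subset.trans hX⟩
  ext w
  constructor
  · intro hw
    have hwR : w ∈ R := (P ↾ R).closure_subset_ground I hw
    have hb := hIi.insert_isBasis_iff_mem_closure.2 hw
    have := ((isBasis_restrict_iff hR).1 hb).1
    exact ⟨hI.indep.insert_isBasis_iff_mem_closure.1 this, hwR⟩
  · rintro ⟨hw1, hw2⟩
    have hb := hI.indep.insert_isBasis_iff_mem_closure.2 hw1
    have : (P ↾ R).IsBasis I (insert w I) :=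
      (isBasis_restrict_iff hR).2 ⟨hb, insert_subset hw2 (hI.subset.trans hX)⟩
    exact hIi.insert_isBasis_iff_mem_closure.1 this

/-- Parallel swap: replacing an element of a circuit by a parallel one yields a circuit. -/
lemma circuit_swap (hP : Loopless' P) (hZ : Circuit P Z) (hc : c ∈ Z)
    (hy : y ∈ P.closure {c}) (hyc : y ≠ c) (hyZ : y ∉ Z) :
    Circuit P (insert y (Z \ {c})) := by
  have hcE : c ∈ P.E := hZ.dep.subset_ground hc
  have hyE : y ∈ P.E := P.closure_subset_ground _ hy
  have hZc : P.Indep (Z \ {c}) := hZ.diff_singleton_indep hc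
  have hccl : c ∈ P.closure (Z \ {c}) := hZ.mem_closure_diff hc
  have hycl : y ∈ P.closure (Z \ {c}) := by
    have : P.closure {c} ⊆ P.closure (Z \ {c}) :=
      P.closure_subset_closure_of_subset_closure (singleton_subset_iff.2 hccl)
    exact this hy
  have hynZc : y ∉ Z \ {c} := fun h => hyZ h.1
  have hdep : P.Dep (insert y (Z \ {c})) := hZc.insert_dep_iff.2 ⟨hycl, hynZc⟩
  refine ⟨hdep, fun D hD hDsub => ?_⟩
  obtain ⟨D', hD', hD'sub⟩ := exists_circuit_subset hD
  have hyD' : y ∈ D' := by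
    by_contra hyD'
    refine hD'.dep.not_indep (hZc.subset fun w hw => ?_)
    rcases hDsub (hD'sub hw) with rfl | h
    · exact absurd hw hyD'
    · exact h
  -- insert c (D' \ {y}) is a dependent subset of Z, hence = Z
  have hD'y : P.Indep (D' \ {y}) := hD'.diff_singleton_indep hyD'
  have hccl' : c ∈ P.closure (D' \ {y}) := by
    have h1 : y ∈ P.closure (D' \ {y}) := hD'.mem_closure_diff hyD'
    have h2 : P.closure {y} = P.closure {c} := cl_singleton_comm hP hcE hy
    have h3 : c ∈ P.closure {y} := by
      rw [h2]; exact P.mem_closure_self c hcE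
    exact (P.closure_subset_closure_of_subset_closure (singleton_subset_iff.2 h1)) h3
  have hcnD' : c ∉ D' \ {y} := by
    rintro ⟨hcD', -⟩
    rcases hDsub (hD'sub hcD') with h | h
    · exact hyc h.symm
    · exact h.2 rfl
  have hdep2 : P.Dep (insert c (D' \ {y})) := hD'y.insert_dep_iff.2 ⟨hccl', hcnD'⟩
  have hsubZ : insert c (D' \ {y}) ⊆ Z := by
    rintro w (rfl | hw)
    · exact hc
    · rcases hDsub (hD'sub hw.1) with h | h
      · exact absurd h hw.2
      · exact h.1
  have heqZ : insert c (D' \ {y}) = Z := hZ.2 _ hdep2 hsubZ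
  -- hence D' = insert y (Z \ {c}) ⊆ D, so D = insert y (Z \ {c})
  have hD'eq : D' = insert y (Z \ {c}) := by
    ext w
    constructor
    · intro hw
      by_cases hwy : w = y
      · exact hwy ▸ mem_insert _ _
      · refine Or.inr ⟨heqZ ▸ Or.inr ⟨hw, hwy⟩, ?_⟩
        rintro rfl
        exact hcnD' ⟨hw, hwy⟩
    · rintro (rfl | hw)
      · exact hyD'
      · have : w ∈ insert c (D' \ {y}) := heqZ.symm ▸ hw.1
        rcases this with rfl | h
        · exact absurd rfl hw.2
        · exact h.1
  exact hDsub.antisymm (hD'eq ▸ hD'sub)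

section Simplification

lemma repSet_subset_ground : rep P '' P.E ⊆ P.E := by
  rintro _ ⟨z, hz, rfl⟩
  exact rep_mem_ground hz

/-- key: a flat is the closure of its representatives -/
lemma flat_closure_inter_rep (hP : Loopless' P) (hF : P.IsFlat F) :
    P.closure (F ∩ (rep P '' P.E)) = F := by
  refine subset_antisymm ?_ ?_
  · have := P.closure_subset_closure (inter_subset_left (t := rep P '' P.E) (s := F))
    rwa [hF.closure] at this
  · intro w hw
    have hwE : w ∈ P.E := hF.subset_ground hw
    have hrw : rep P w ∈ F := by
      have : rep P w ∈ P.closure {w} := rep_mem hwE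
      have hsub : P.closure {w} ⊆ P.closure F :=
        P.closure_subset_closure (singleton_subset_iff.2 hw)
      exact hF.closure ▸ hsub this
    have hwcl : w ∈ P.closure {rep P w} := by
      rw [cl_rep hP hwE]
      exact P.mem_closure_self w hwE
    have : P.closure {rep P w} ⊆ P.closure (F ∩ (rep P '' P.E)) :=
      P.closure_subset_closure (singleton_subset_iff.2 ⟨hrw, ⟨w, hwE, rfl⟩⟩)
    exact this hwcl

lemma flat_inter_rep_flat (hP : Loopless' P) (hF : P.IsFlat F) :
    (P ↾ (rep P '' P.E)).IsFlat (F ∩ (rep P '' P.E)) := by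
  rw [flat_iff']
  refine ⟨?_, by simp [inter_subset_right]⟩
  rw [restrict_closure_eq' (repSet_subset_ground) inter_subset_right,
    flat_closure_inter_rep hP hF]

lemma restrict_flat_closure_flat (hG : (P ↾ (rep P '' P.E)).IsFlat G) :
    P.IsFlat (P.closure G) := flat_closure P G

lemma restrict_flat_closure_inter (hG : (P ↾ (rep P '' P.E)).IsFlat G) :
    P.closure G ∩ (rep P '' P.E) = G := by
  have hGsub : G ⊆ rep P '' P.E := hG.subset_ground
  rw [← restrict_closure_eq' (repSet_subset_ground) hGsub, hG.closure]

/-- The order isomorphism between flats of `P` and flats of its simplification. -/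
noncomputable def flatsIso (hP : Loopless' P) :
    {F : Set α // P.IsFlat F} ≃o {G : Set α // (P ↾ (rep P '' P.E)).IsFlat G} where
  toFun := fun F => ⟨F.1 ∩ (rep P '' P.E), flat_inter_rep_flat hP F.2⟩
  invFun := fun G => ⟨P.closure G.1, flat_closure P G.1⟩
  left_inv := fun F => Subtype.ext (flat_closure_inter_rep hP F.2)
  right_inv := fun G => Subtype.ext (restrict_flat_closure_inter G.2)
  map_rel_iff' := by
    rintro ⟨F₁, h1⟩ ⟨F₂, h2⟩
    constructor
    · intro h
      have h' : F₁ ∩ (rep P '' P.E) ⊆ F₂ ∩ (rep P '' P.E) := Subtype.mk_le_mk.1 h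
      have := P.closure_subset_closure h'
      rw [flat_closure_inter_rep hP h1, flat_closure_inter_rep hP h2] at this
      exact Subtype.mk_le_mk.2 this
    · intro h
      exact Subtype.mk_le_mk.2 (Set.inter_subset_inter_left _ (Subtype.mk_le_mk.1 h))

lemma simple_simplification (hP : Loopless' P) : Simple (P ↾ (rep P '' P.E)) := by
  intro I hIsub hIcard
  rw [restrict_ground_eq] at hIsub
  rw [restrict_indep_iff]
  refine ⟨?_, hIsub⟩
  by_contra hni
  have hdep : P.Dep I := ⟨hni, hIsub.trans repSet_subset_ground⟩
  obtain ⟨Z, hZ, hZsub⟩ := exists_circuit_subset hdep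
  have hZR : Z ⊆ rep P '' P.E := hZsub.trans hIsub
  have hZE : Z ⊆ P.E := hZR.trans repSet_subset_ground
  have hZcard : Z.ncard ≤ 2 :=
    le_trans (Set.ncard_le_ncard hZsub (Set.toFinite _)) hIcard
  have h1 : 0 < Z.ncard := Set.ncard_pos (Set.toFinite _) |>.2 hZ.nonempty
  interval_cases h : Z.ncard
  · obtain ⟨u, hu⟩ := Set.ncard_eq_one.1 h
    subst hu
    exact hZ.dep.not_indep (hP u (hZE rfl))
  · obtain ⟨u, v, huv, huvZ⟩ := Set.ncard_eq_two.1 h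
    subst huvZ
    have huE : u ∈ P.E := hZE (Or.inl rfl)
    have hvE : v ∈ P.E := hZE (Or.inr rfl)
    have hucl : u ∈ P.closure {v} := by
      have hvi : P.Indep {v} := hP v hvE
      have : P.Dep (insert u {v}) := by
        have : ({u, v} : Set α) = insert u {v} := rfl
        exact this ▸ hZ.dep
      exact ((hvi.insert_dep_iff).1 this).1
    have hcl : P.closure {u} = P.closure {v} := cl_singleton_comm hP hvE hucl
    have hru : rep P u = u := (mem_rep_image_iff hP huE).1 (hZR (Or.inl rfl))
    have hrv : rep P v = v := (mem_rep_image_iff hP hvE).1 (hZR (Or.inr rfl))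
    exact huv (hru ▸ hrv ▸ rep_eq_of_cl_eq hcl)

lemma circuit_to_rep (hP : Loopless' P) : ∀ (n : ℕ) (Z : Set α), (Z \ (rep P '' P.E)).ncard ≤ n →
    Circuit P Z → x ∈ Z → y ∈ Z → x ∈ rep P '' P.E → y ∈ rep P '' P.E → x ≠ y →
    ∃ Z', Circuit P Z' ∧ Z' ⊆ rep P '' P.E ∧ x ∈ Z' ∧ y ∈ Z' := by
  intro n
  induction n with
  | zero =>
    intro Z hn hZ hx hy hxR hyR hxy
    rw [Nat.le_zero, Set.ncard_eq_zero (Set.toFinite _), diff_eq_empty] at hn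
    exact ⟨Z, hZ, hn, hx, hy⟩
  | succ n ih =>
    intro Z hn hZ hx hy hxR hyR hxy
    by_cases hZR : Z ⊆ rep P '' P.E
    · exact ⟨Z, hZ, hZR, hx, hy⟩
    obtain ⟨c, hcZ, hcR⟩ := not_subset.1 hZR
    have hcE : c ∈ P.E := hZ.dep.subset_ground hcZ
    have hrc : rep P c ≠ c := fun h => hcR ((mem_rep_image_iff hP hcE).2 h)
    have hrcR : rep P c ∈ rep P '' P.E := ⟨c, hcE, rfl⟩
    by_cases hrcZ : rep P c ∈ Z
    · -- Z is the parallel pair {rep P c, c}; impossible since x,y ∈ R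
      exfalso
      have hpair : P.Dep (insert (rep P c) {c}) := by
        have hci : P.Indep {c} := hP c hcE
        exact hci.insert_dep_iff.2 ⟨rep_mem hcE, fun h => hrc (mem_singleton_iff.1 h)⟩
      have hZeq : insert (rep P c) {c} = Z :=
        hZ.2 _ hpair (insert_subset hrcZ (singleton_subset_iff.2 hcZ))
      have hxmem : x ∈ insert (rep P c) {c} := hZeq ▸ hx
      have hymem : y ∈ insert (rep P c) {c} := hZeq ▸ hy
      have hxval : x = rep P c := by
        rcases hxmem with h | h
        · exact h
        · exact absurd ((mem_singleton_iff.1 h) ▸ hxR) hcR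
      have hyval : y = rep P c := by
        rcases hymem with h | h
        · exact h
        · exact absurd ((mem_singleton_iff.1 h) ▸ hyR) hcR
      exact hxy (hxval.trans hyval.symm)
    · have hZ' : Circuit P (insert (rep P c) (Z \ {c})) :=
        circuit_swap hP hZ hcZ (rep_mem hcE) hrc hrcZ
      have hcard : ((insert (rep P c) (Z \ {c})) \ (rep P '' P.E)).ncard ≤ n := by
        have heq : (insert (rep P c) (Z \ {c})) \ (rep P '' P.E) =
            (Z \ (rep P '' P.E)) \ {c} := by
          ext w
          constructor
          · rintro ⟨(rfl | hw), hwR⟩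
            · exact absurd hrcR hwR
            · exact ⟨⟨hw.1, hwR⟩, hw.2⟩
          · rintro ⟨⟨hw1, hw2⟩, hw3⟩
            exact ⟨Or.inr ⟨hw1, hw3⟩, hw2⟩
        rw [heq]
        have hcmem : c ∈ Z \ (rep P '' P.E) := ⟨hcZ, hcR⟩
        have := Set.ncard_diff_singleton_lt_of_mem hcmem (Set.toFinite _)
        omega
      have hxmem : x ∈ insert (rep P c) (Z \ {c}) :=
        Or.inr ⟨hx, fun h => hcR ((mem_singleton_iff.1 h) ▸ hxR)⟩
      have hymem : y ∈ insert (rep P c) (Z \ {c}) :=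
        Or.inr ⟨hy, fun h => hcR ((mem_singleton_iff.1 h) ▸ hyR)⟩
      exact ih _ hcard hZ' hxmem hymem hxR hyR hxy

lemma connected_simplification (hP : Loopless' P) (hPc : Connected P) :
    Connected (P ↾ (rep P '' P.E)) := by
  constructor
  · obtain ⟨w, hw⟩ := hPc.1
    exact ⟨rep P w, ⟨w, hw, rfl⟩⟩
  · intro a b ha hb hab
    rw [restrict_ground_eq] at ha hb
    have haE : a ∈ P.E := repSet_subset_ground ha
    have hbE : b ∈ P.E := repSet_subset_ground hb
    obtain ⟨Z, hZ, haZ, hbZ⟩ := hPc.2 a b haE hbE hab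
    obtain ⟨Z', hZ', hZ'R, haZ', hbZ'⟩ :=
      circuit_to_rep hP (Z \ (rep P '' P.E)).ncard Z le_rfl hZ haZ hbZ ha hb hab
    refine ⟨Z', ⟨?_, ?_⟩, haZ', hbZ'⟩
    · rw [restrict_dep_iff]
      exact ⟨hZ'.dep.not_indep, hZ'R⟩
    · intro D hD hDsub
      rw [restrict_dep_iff] at hD
      exact hZ'.2 D ⟨hD.1, (hDsub.trans hZ'R).trans repSet_subset_ground⟩ hDsub

end Simplification
lemma circuit_ncard_ge (hs : Simple M) (hC : Circuit M C) : 3 ≤ C.ncard := by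
  by_contra h
  push_neg at h
  exact hC.dep.not_indep (hs C hC.dep.subset_ground (by omega))

lemma simple_loopless (hs : Simple M) : Loopless' M := fun e he =>
  hs {e} (singleton_subset_iff.2 he) (by simp)

lemma con_loopless (hs : Simple M) (heE : e ∈ M.E) : Loopless' (con M {e}) := by
  intro w hw
  rw [con_ground] at hw
  rw [con_indep (simple_loopless hs e heE) heE]
  refine ⟨singleton_subset_iff.2 hw, ?_⟩
  refine hs _ (insert_subset heE (singleton_subset_iff.2 hw.1)) ?_
  exact le_trans (Set.ncard_insert_le _ _) (by simp)

lemma con_connected_of_max_circuit (hs : Simple M) (hc : Connected M)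
    (hC : Circuit M C) (hmax : ∀ C', Circuit M C' → C'.ncard ≤ C.ncard)
    (heC : e ∈ C) : Connected (con M {e}) := by
  have heE : e ∈ M.E := hC.dep.subset_ground heC
  have he : M.Indep {e} := simple_loopless hs e heE
  set P := con M {e} with hPdef
  have hPE : P.E = M.E \ {e} := con_ground M e
  -- C \ {e} is nonempty (indeed has ≥ 2 elements)
  have hC3 : 3 ≤ C.ncard := circuit_ncard_ge hs hC
  have hCe : Circuit P (C \ {e}) := con_circuit_of_circuit he heE hC heC
  have hCene : (C \ {e}).Nonempty := hCe.nonempty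
  obtain ⟨c₀, hc₀⟩ := hCene
  have hc₀C : c₀ ∈ C := hc₀.1
  have hc₀e : c₀ ≠ e := hc₀.2
  constructor
  · exact ⟨c₀, hPE ▸ ⟨hC.dep.subset_ground hc₀C, hc₀e⟩⟩
  intro x y hx hy hxy
  by_contra hnc
  -- connectivity relation on P
  set rel : α → α → Prop := fun u v => u = v ∨ ∃ Z, Circuit P Z ∧ u ∈ Z ∧ v ∈ Z with hrel
  have hsymm : ∀ u v, rel u v → rel v u := by
    rintro u v (rfl | ⟨Z, h1, h2, h3⟩)
    · exact Or.inl rfl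
    · exact Or.inr ⟨Z, h1, h3, h2⟩
  have htrans : ∀ u v w, rel u v → rel v w → rel u w := by
    rintro u v w (rfl | ⟨Z₁, h1, hu1, hv1⟩) hvw
    · exact hvw
    rcases hvw with rfl | ⟨Z₂, h2, hv2, hw2⟩
    · exact Or.inr ⟨Z₁, h1, hu1, hv1⟩
    by_cases huw : u = w
    · exact Or.inl huw
    · exact Or.inr (conn_trans_aux ((Z₁ ∪ Z₂).ncard) Z₁ Z₂ u v w le_rfl
        h1 h2 hu1 hv1 hv2 hw2 huw)
  set A : Set α := {w | w ∈ P.E ∧ rel c₀ w} with hA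
  set B : Set α := P.E \ A with hB
  have hsplit : ∀ Z, Circuit P Z → Z ⊆ A ∨ Z ⊆ B := by
    intro Z hZ
    by_cases hZA : ∃ a, a ∈ Z ∧ a ∈ A
    · obtain ⟨a, haZ, haA⟩ := hZA
      left
      intro w hw
      exact ⟨hZ.dep.subset_ground hw, htrans c₀ a w haA.2 (Or.inr ⟨Z, hZ, haZ, hw⟩)⟩
    · right
      intro w hw
      exact ⟨hZ.dep.subset_ground hw, fun hwA => hZA ⟨w, hw, hwA⟩⟩
  have hABdisj : ∀ w, w ∈ A → w ∈ B → False := fun w h1 h2 => h2.2 h1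
  have hc₀A : c₀ ∈ A := ⟨hPE ▸ ⟨hC.dep.subset_ground hc₀C, hc₀e⟩, Or.inl rfl⟩
  have hCA : C \ {e} ⊆ A := by
    rcases hsplit _ hCe with h | h
    · exact h
    · exact absurd hc₀A (fun hA => hABdisj c₀ hA (h hc₀))
  have hBne : B.Nonempty := by
    by_contra hBe
    rw [not_nonempty_iff_eq_empty] at hBe
    have hxA : x ∈ A := by
      by_contra h
      exact (hBe ▸ (⟨hx, h⟩ : x ∈ B) : x ∈ (∅ : Set α))
    have hyA : y ∈ A := by
      by_contra h
      exact (hBe ▸ (⟨hy, h⟩ : y ∈ B) : y ∈ (∅ : Set α))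
    rcases htrans x c₀ y (hsymm c₀ x hxA.2) hyA.2 with h | h
    · exact hxy h
    · exact hnc h
  obtain ⟨b, hbB⟩ := hBne
  have hbE : b ∈ M.E := (hPE ▸ hbB.1).1
  have hbe : b ≠ e := (hPE ▸ hbB.1).2
  obtain ⟨D, hD, hbD, heD⟩ := hc.2 b e hbE heE hbe
  have hDe : Circuit P (D \ {e}) := con_circuit_of_circuit he heE hD heD
  have hDB : D \ {e} ⊆ B := by
    rcases hsplit _ hDe with h | h
    · exact absurd (h ⟨hbD, hbe⟩) (fun hA => hABdisj b hA hbB)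
    · exact h
  have hbC : b ∉ C := fun h => hABdisj b (hCA ⟨h, hbe⟩) hbB
  have hCD : D ≠ C := fun h => hbC (h ▸ hbD)
  obtain ⟨K, hK, hbK, hKsub₀⟩ := strong_elimination hD hC hCD ⟨heD, heC⟩ ⟨hbD, hbC⟩
  have hKsub : K ⊆ (C ∪ D) \ {e} := by rwa [union_comm] at hKsub₀
  have heK : e ∉ K := fun h => (hKsub h).2 rfl
  have hKPdep : P.Dep K := con_dep_of_circuit_not_mem he heE hK heK
  -- general: any P-circuit inside a subset of (C ∪ D) \ {e} forces C\{e} or D\{e} inside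
  have hD3 : 3 ≤ D.ncard := circuit_ncard_ge hs hD
  -- the final contradiction from a circuit of the form insert b₁ (C \ {e})
  have final : ∀ b₁, b₁ ∈ B → Circuit M (insert b₁ (C \ {e})) → False := by
    intro b₁ hb₁B hKc
    have hb₁e : b₁ ≠ e := (hPE ▸ hb₁B.1).2
    have hb₁C : b₁ ∉ C := fun h => hABdisj b₁ (hCA ⟨h, hb₁e⟩) hb₁B
    have hne : C ≠ insert b₁ (C \ {e}) := fun h => hb₁C (h ▸ mem_insert b₁ _)
    have hc₀mem : c₀ ∈ C ∩ insert b₁ (C \ {e}) := ⟨hc₀C, Or.inr ⟨hc₀C, hc₀e⟩⟩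
    have heNot : e ∈ C \ insert b₁ (C \ {e}) := by
      refine ⟨heC, ?_⟩
      rintro (h | h)
      · exact hb₁e h.symm
      · exact h.2 rfl
    obtain ⟨L, hL, heL, hLsub⟩ := strong_elimination hC hKc hne hc₀mem heNot
    have hLe : Circuit P (L \ {e}) := con_circuit_of_circuit he heE hL heL
    rcases hsplit _ hLe with hLA | hLB
    · have hsub2 : L \ {e} ⊆ C \ {e} := by
        intro w hw
        have hwL := hLsub hw.1
        rcases hwL.1 with h | h
        · exact ⟨h, hw.2⟩
        · rcases h with rfl | h
          · exact absurd (hLA hw) (fun hA => hABdisj w hA hb₁B)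
          · exact h
      have heq : L \ {e} = C \ {e} := hCe.2 _ hLe.dep hsub2
      have hmem : c₀ ∈ L \ {e} := heq ▸ hc₀
      exact (hLsub hmem.1).2 rfl
    · have hsub2 : L \ {e} ⊆ {b₁} := by
        intro w hw
        have hwL := hLsub hw.1
        rcases hwL.1 with h | h
        · exact absurd (hCA ⟨h, hw.2⟩) (fun hA => hABdisj w hA (hLB hw))
        · rcases h with rfl | h
          · rfl
          · exact absurd (hCA h) (fun hA => hABdisj w hA (hLB hw))
      have hLsubpair : L ⊆ insert e {b₁} := by
        intro w hw
        by_cases hwe : w = e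
        · exact Or.inl hwe
        · exact Or.inr (hsub2 ⟨hw, hwe⟩)
      have hL2 : L.ncard ≤ 2 := by
        refine le_trans (Set.ncard_le_ncard hLsubpair (Set.toFinite _)) ?_
        exact le_trans (Set.ncard_insert_le _ _) (by simp)
      have := circuit_ncard_ge hs hL
      omega
  -- Main case split
  obtain ⟨Z, hZ, hZK⟩ := exists_circuit_subset hKPdep
  by_cases hCK : C \ {e} ⊆ K
  · -- K = insert b (C \ {e})
    have hKeq : insert b (C \ {e}) = K := by
      have hbnC : b ∉ C \ {e} := fun h => hbC h.1
      have h1 : K.ncard ≤ C.ncard := hmax K hK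
      have h2 : (insert b (C \ {e})).ncard = C.ncard := by
        rw [Set.ncard_insert_of_notMem hbnC (Set.toFinite _),
          Set.ncard_diff_singleton_add_one heC (Set.toFinite _)]
      exact Set.eq_of_subset_of_ncard_le (insert_subset hbK hCK) (by omega) (Set.toFinite _)
    exact final b hbB (hKeq ▸ hK)
  · have hDK : D \ {e} ⊆ K := by
      -- via the P-circuit Z inside K
      rcases hsplit _ hZ with hZA | hZB
      · exfalso
        apply hCK
        have hZsub : Z ⊆ C \ {e} := by
          intro w hw
          rcases (hKsub (hZK hw)).1 with h | h
          · exact ⟨h, (hKsub (hZK hw)).2⟩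
          · exact absurd (hZA hw) (fun hA => hABdisj w hA (hDB ⟨h, (hKsub (hZK hw)).2⟩))
        rw [← hCe.2 _ hZ.dep hZsub]
        exact hZK
      · have hZsub : Z ⊆ D \ {e} := by
          intro w hw
          rcases (hKsub (hZK hw)).1 with h | h
          · exact absurd (hCA ⟨h, (hKsub (hZK hw)).2⟩)
              (fun hA => hABdisj w hA (hZB hw))
          · exact ⟨h, (hKsub (hZK hw)).2⟩
        rw [← hDe.2 _ hZ.dep hZsub]
        exact hZK
    obtain ⟨a₀, ha₀C, ha₀K⟩ := not_subset.1 hCK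
    have hKDne : ¬ K ⊆ D \ {e} := fun h =>
      hK.dep.not_indep ((hD.diff_singleton_indep heD).subset h)
    obtain ⟨c', hc'K, hc'D⟩ := not_subset.1 hKDne
    have hc'C : c' ∈ C \ {e} := by
      rcases (hKsub hc'K).1 with h | h
      · exact ⟨h, (hKsub hc'K).2⟩
      · exact absurd ⟨h, (hKsub hc'K).2⟩ hc'D
    have hCKne : C ≠ K := fun h => ha₀K (h ▸ ha₀C.1)
    obtain ⟨L, hL, ha₀L, hLsub⟩ :=
      strong_elimination hC hK hCKne ⟨hc'C.1, hc'K⟩ ⟨ha₀C.1, ha₀K⟩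
    have hLCD : L ⊆ (C ∪ D) \ {c'} := by
      intro w hw
      refine ⟨?_, (hLsub hw).2⟩
      rcases (hLsub hw).1 with h | h
      · exact Or.inl h
      · exact (hKsub h).1
    have hc'L : c' ∉ L := fun h => (hLsub h).2 rfl
    have ha₀A : a₀ ∈ A := hCA ha₀C
    by_cases heL : e ∈ L
    · have hLPe : Circuit P (L \ {e}) := con_circuit_of_circuit he heE hL heL
      have ha₀Le : a₀ ∈ L \ {e} := ⟨ha₀L, ha₀C.2⟩
      rcases hsplit _ hLPe with hLA | hLB
      · have hsub2 : L \ {e} ⊆ C \ {e} := by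
          intro w hw
          rcases (hLCD hw.1).1 with h | h
          · exact ⟨h, hw.2⟩
          · exact absurd (hLA hw) (fun hA => hABdisj w hA (hDB ⟨h, hw.2⟩))
        have heq : L \ {e} = C \ {e} := hCe.2 _ hLPe.dep hsub2
        have hmem : c' ∈ L \ {e} := heq ▸ hc'C
        exact hc'L hmem.1
      · exact hABdisj a₀ ha₀A (hLB ha₀Le)
    · have hLPdep : P.Dep L := con_dep_of_circuit_not_mem he heE hL heL
      obtain ⟨Z', hZ', hZ'L⟩ := exists_circuit_subset hLPdep
      have hDL : D \ {e} ⊆ L := by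
        rcases hsplit _ hZ' with hZ'A | hZ'B
        · exfalso
          have hsub3 : Z' ⊆ C \ {e} := by
            intro w hw
            have hwE : w ∈ P.E := hZ'.dep.subset_ground hw
            have hwe : w ≠ e := (hPE ▸ hwE).2
            rcases (hLCD (hZ'L hw)).1 with h | h
            · exact ⟨h, hwe⟩
            · exact absurd (hZ'A hw) (fun hA => hABdisj w hA (hDB ⟨h, hwe⟩))
          have heq := hCe.2 _ hZ'.dep hsub3
          have : c' ∈ Z' := heq ▸ hc'C
          exact hc'L (hZ'L this)
        · have hsub3 : Z' ⊆ D \ {e} := by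
            intro w hw
            have hwE : w ∈ P.E := hZ'.dep.subset_ground hw
            have hwe : w ≠ e := (hPE ▸ hwE).2
            rcases (hLCD (hZ'L hw)).1 with h | h
            · exact absurd (hCA ⟨h, hwe⟩) (fun hA => hABdisj w hA (hZ'B hw))
            · exact ⟨h, hwe⟩
          rw [← hDe.2 _ hZ'.dep hsub3]
          exact hZ'L
      have hKLne : K ≠ L := fun h => hc'L (h ▸ hc'K)
      have hDene : (D \ {e}).Nonempty := hDe.nonempty
      obtain ⟨b₀, hb₀⟩ := hDene
      obtain ⟨Z'', hZ'', hc'Z'', hZ''sub⟩ :=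
        strong_elimination hK hL hKLne ⟨hDK hb₀, hDL hb₀⟩ ⟨hc'K, hc'L⟩
      have heZ'' : e ∉ Z'' := by
        intro h
        rcases (hZ''sub h).1 with h' | h'
        · exact heK h'
        · exact heL h'
      have hZ''CD : ∀ w ∈ Z'', w ∈ C ∪ D := by
        intro w hw
        rcases (hZ''sub hw).1 with h | h
        · exact (hKsub h).1
        · exact (hLCD h).1
      have hZ''P : P.Dep Z'' := con_dep_of_circuit_not_mem he heE hZ'' heZ''
      obtain ⟨W, hW, hWsub⟩ := exists_circuit_subset hZ''P
      rcases hsplit _ hW with hWA | hWB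
      · -- C \ {e} ⊆ Z'' and Z'' = insert b₁ (C\{e})
        have hsub3 : W ⊆ C \ {e} := by
          intro w hw
          have hwE : w ∈ P.E := hW.dep.subset_ground hw
          have hwe : w ≠ e := (hPE ▸ hwE).2
          rcases hZ''CD w (hWsub hw) with h | h
          · exact ⟨h, hwe⟩
          · exact absurd (hWA hw) (fun hA => hABdisj w hA (hDB ⟨h, hwe⟩))
        have heq3 : W = C \ {e} := hCe.2 _ hW.dep hsub3
        have hCZ'' : C \ {e} ⊆ Z'' := heq3 ▸ hWsub
        have hZ''ne : ¬ Z'' ⊆ C \ {e} := fun h =>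
          hZ''.dep.not_indep ((hC.diff_singleton_indep heC).subset h)
        obtain ⟨b₁, hb₁Z, hb₁nC⟩ := not_subset.1 hZ''ne
        have hb₁e : b₁ ≠ e := fun h => heZ'' (h ▸ hb₁Z)
        have hb₁D : b₁ ∈ D \ {e} := by
          rcases hZ''CD b₁ hb₁Z with h | h
          · exact absurd ⟨h, hb₁e⟩ hb₁nC
          · exact ⟨h, hb₁e⟩
        have hb₁B : b₁ ∈ B := hDB hb₁D
        have hZ''eq : insert b₁ (C \ {e}) = Z'' := by
          have h1 : Z''.ncard ≤ C.ncard := hmax Z'' hZ''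
          have h2 : (insert b₁ (C \ {e})).ncard = C.ncard := by
            rw [Set.ncard_insert_of_notMem hb₁nC (Set.toFinite _),
              Set.ncard_diff_singleton_add_one heC (Set.toFinite _)]
          exact Set.eq_of_subset_of_ncard_le (insert_subset hb₁Z hCZ'') (by omega)
            (Set.toFinite _)
        exact final b₁ hb₁B (hZ''eq ▸ hZ'')
      · have hsub3 : W ⊆ D \ {e} := by
          intro w hw
          have hwE : w ∈ P.E := hW.dep.subset_ground hw
          have hwe : w ≠ e := (hPE ▸ hwE).2
          rcases hZ''CD w (hWsub hw) with h | h
          · exact absurd (hCA ⟨h, hwe⟩) (fun hA => hABdisj w hA (hWB hw))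
          · exact ⟨h, hwe⟩
        have heq3 : W = D \ {e} := hDe.2 _ hW.dep hsub3
        have : b₀ ∈ W := heq3 ▸ hb₀
        exact (hZ''sub (hWsub this)).2 rfl


end Helpers

/-- If `M` is a simple connected matroid on a finite ground set `E` with at
least two elements, then there exists an element `i ∈ E` such that the lattice of flats of
the contraction `M/i` is isomorphic to the lattice of flats of a simple connected matroid
(equivalently, the simplification of `M/i` is a connected matroid). -/
theorem exists_contract_flats_iso_simple_connected {α : Type} [Fintype α]
    (M : Matroid α) (hs : Simple M) (hc : Connected M) (h2 : 2 ≤ M.E.ncard) :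
    ∃ i ∈ M.E, ∃ (β : Type) (N : Matroid β), N.E.Finite ∧ Simple N ∧ Connected N ∧
      Nonempty ({F : Set α // (con M {i}).IsFlat F} ≃o {F : Set β // N.IsFlat F}) := by
  classical
  have hloop : Loopless' M := simple_loopless hs
  -- two distinct elements of the ground set
  have h1lt : 1 < M.E.ncard := h2
  obtain ⟨a, ha, b, hb, hab⟩ := (Set.one_lt_ncard (Set.toFinite _)).1 h1lt
  obtain ⟨C₀, hC₀, -, -⟩ := hc.2 a b ha hb hab
  -- a circuit of maximum size
  obtain ⟨C, hCmem, hCmax⟩ := Set.Finite.exists_maximalFor Set.ncard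
    {C : Set α | Circuit M C} (Set.toFinite _) ⟨C₀, hC₀⟩
  have hC : Circuit M C := hCmem
  have hmax : ∀ C', Circuit M C' → C'.ncard ≤ C.ncard := by
    intro C' h'
    by_contra hlt
    push_neg at hlt
    have := hCmax h' (le_of_lt hlt)
    omega
  obtain ⟨e, heC⟩ := hC.nonempty
  have heE : e ∈ M.E := hC.dep.subset_ground heC
  have hP : Loopless' (con M {e}) := con_loopless hs heE
  have hPc : Connected (con M {e}) := con_connected_of_max_circuit hs hc hC hmax heC
  exact ⟨e, heE, α, (con M {e}) ↾ (rep (con M {e}) '' (con M {e}).E),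
    Set.toFinite _, simple_simplification hP, connected_simplification hP hPc,
    ⟨flatsIso hP⟩⟩

end KL
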